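/- arXiv:1205.1773 — 2 statements merged into one kernel-verified Lean document; each statement's English description precedes it below -/
import Mathlib

section
/- Let K be a field of characteristic 0, n ≥ 2, m ≥ 1, k ≤ m, and H_1, ..., H_k distinct parallel affine hyperplanes in K^n. If E ⊆ K^n is a finite set with #E ≤ binomial(m+n-1, n) and #(E ∩ (H_1 ∪ ... ∪ H_k)) > binomial(m+n-1, n) - binomial(m-k+n-1, n), then there exists a nonzero polynomial of degree ≤ m-1 vanishing on E ∩ (H_1 ∪ ... ∪ H_k); in particular E does not impose independent conditions on polynomials of degree ≤ m-1. -/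
/-!
Let `E'` be the set of points of `E` on the hyperplanes `ℓ = cᵢ`. When `k < m`, the polynomial
`p = ∏ᵢ (ℓ - cᵢ)` has degree `k` and vanishes on `E'`, so its multiples `p * g` with
`deg g ≤ m - 1 - k` form a space of dimension `C(m-k+n-1, n)` of polynomials of degree `≤ m - 1`
vanishing on `E'`. Each of the `#E - #E'` remaining points of `E` lowers this dimension by at most
one, so the polynomials of degree `≤ m - 1` vanishing on `E` have dimension at least
`C(m-k+n-1, n) - #E + #E' > C(m+n-1, n) - #E`.
When `k ≥ m`, `C(m-k+n-1, n) = 0` and the hypotheses contradict `#E' ≤ #E ≤ C(m+n-1, n)`.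
-/

open MvPolynomial
open scoped Classical

noncomputable def vanishSpace (K : Type*) [Field K] (n D : ℕ)
    (E : Set (Fin n → K)) : Submodule K (MvPolynomial (Fin n) K) :=
  MvPolynomial.restrictTotalDegree (Fin n) K D ⊓
    ⨅ x ∈ E, LinearMap.ker (MvPolynomial.aeval (R := K) x).toLinearMap

namespace Finsupp

/-- Stars and bars, after homogenizing: `s ↦ cons (D - |s|) s` matches exponents of degree `≤ D`
in `n` variables with exponents of degree exactly `D` in `n + 1` variables. -/
theorem natCard_sum_le_eq_choose (n D : ℕ) :
    Nat.card {s : Fin n →₀ ℕ // (s.sum fun _ e => e) ≤ D} = (D + n).choose n := by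
  have sum_eq (t : Fin (n + 1) →₀ ℕ) :
      t.sum (fun _ => id) = t 0 + (tail t).sum fun _ e => e := by
    conv_lhs => rw [← cons_tail t]
    exact sum_cons n _ _
  let homogenize : {s : Fin n →₀ ℕ // (s.sum fun _ e => e) ≤ D} ≃
      {t : Fin (n + 1) →₀ ℕ // t.sum (fun _ => id) = D} :=
    { toFun := fun s => ⟨cons (D - s.1.sum fun _ e => e) s.1,
        (sum_cons n s.1 _).trans (Nat.sub_add_cancel s.2)⟩
      invFun := fun t => ⟨tail t.1, by have := sum_eq t.1 ▸ t.2; omega⟩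
      left_inv := fun s => by simp
      right_inv := fun t => by
        have := sum_eq t.1 ▸ t.2
        ext1
        conv_rhs => rw [← cons_tail t.1]
        dsimp only
        congr 1
        omega }
  rw [Nat.card_congr (homogenize.trans (Sym.equivNatSum _ D).symm), Sym.natCard_sym_eq_choose,
    Nat.card_eq_fintype_card, Fintype.card_fin, Nat.add_right_comm, Nat.add_sub_cancel,
    ← Nat.choose_symm_add, Nat.add_comm]

end Finsupp

namespace MvPolynomial

theorem finrank_restrictTotalDegree (R : Type*) [CommRing R] [Nontrivial R] (n D : ℕ) :
    Module.finrank R (restrictTotalDegree (Fin n) R D) = (D + n).choose n :=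
  (Module.finrank_eq_nat_card_basis (basisRestrictSupport R _)).trans
    (Finsupp.natCard_sum_le_eq_choose n D)

theorem exists_totalDegree_le_one_aeval_eq {R σ : Type*} [CommSemiring R] [Fintype σ]
    (ℓ : (σ → R) →ₗ[R] R) :
    ∃ L : MvPolynomial σ R, L.totalDegree ≤ 1 ∧ ∀ x, aeval x L = ℓ x := by
  refine ⟨∑ j, C (ℓ (Pi.single j 1)) * X j,
    (IsHomogeneous.sum _ _ 1 fun j _ => isHomogeneous_C_mul_X _ j).totalDegree_le, fun x => ?_⟩
  conv_rhs => rw [pi_eq_sum_univ' x]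
  simp [mul_comm]

theorem exists_ne_zero_totalDegree_le_vanishing_on_hyperplanes {R σ ι : Type*}
    [CommRing R] [IsDomain R] [Fintype σ] [Fintype ι]
    {ℓ : (σ → R) →ₗ[R] R} (hℓ : ℓ ≠ 0) (c : ι → R) :
    ∃ p : MvPolynomial σ R, p ≠ 0 ∧ p.totalDegree ≤ Fintype.card ι ∧
      ∀ x, (∃ i, ℓ x = c i) → aeval x p = 0 := by
  obtain ⟨L, hLdeg, hL⟩ := exists_totalDegree_le_one_aeval_eq ℓ
  have hfactor (x : σ → R) (i : ι) : aeval x (L - C (c i)) = ℓ x - c i := by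
    rw [map_sub, aeval_C, hL, Algebra.algebraMap_self_apply]
  refine ⟨∏ i, (L - C (c i)), Finset.prod_ne_zero_iff.2 fun i _ hi => hℓ ?_, ?_, ?_⟩
  · have hℓc (x : σ → R) : ℓ x = c i := by
      rw [← sub_eq_zero, ← hfactor, hi, map_zero]
    refine LinearMap.ext fun x => ?_
    rw [hℓc x, ← hℓc 0, map_zero, LinearMap.zero_apply]
  · refine (totalDegree_finsetProd _ _).trans ((Finset.sum_le_sum fun i _ =>
      (totalDegree_sub_C_le L (c i)).trans hLdeg).trans_eq ?_)
    simp
  · rintro x ⟨i, hi⟩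
    rw [map_prod]
    exact Finset.prod_eq_zero (Finset.mem_univ i) (by rw [hfactor, hi, sub_self])

end MvPolynomial

theorem LinearMap.nonempty_of_pi_ne_zero {R σ : Type*} [CommSemiring R]
    {ℓ : (σ → R) →ₗ[R] R} (hℓ : ℓ ≠ 0) : Nonempty σ := by
  by_contra hσ
  rw [not_nonempty_iff] at hσ
  exact hℓ (LinearMap.ext fun x => by rw [Subsingleton.elim x 0, map_zero, LinearMap.zero_apply])

theorem Submodule.finrank_le_finrank_inf_ker_add {K V M : Type*} [Field K] [AddCommGroup V]
    [Module K V] [AddCommGroup M] [Module K M] [FiniteDimensional K M]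
    (U : Submodule K V) [FiniteDimensional K U] (f : V →ₗ[K] M) :
    Module.finrank K U ≤ Module.finrank K ↥(U ⊓ LinearMap.ker f) + Module.finrank K M := by
  have hrank := LinearMap.finrank_range_add_finrank_ker (f.domRestrict U)
  rw [LinearMap.ker_domRestrict, ← Submodule.finrank_map_subtype_eq,
    Submodule.map_comap_subtype] at hrank
  have := Submodule.finrank_le (LinearMap.range (f.domRestrict U))
  omega

section vanishSpace

variable {K : Type*} [Field K] {n : ℕ}

theorem mem_vanishSpace {D : ℕ} {E : Set (Fin n → K)} {f : MvPolynomial (Fin n) K} :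
    f ∈ vanishSpace K n D E ↔ f.totalDegree ≤ D ∧ ∀ x ∈ E, aeval x f = 0 := by
  simp [vanishSpace, Submodule.mem_inf, mem_restrictTotalDegree, Submodule.mem_iInf]

instance (D : ℕ) (E : Set (Fin n → K)) : FiniteDimensional K (vanishSpace K n D E) :=
  Submodule.finiteDimensional_of_le inf_le_left

theorem finrank_vanishSpace_le_finrank_vanishSpace_union_add_card (D : ℕ) (A : Set (Fin n → K))
    (B : Finset (Fin n → K)) :
    Module.finrank K (vanishSpace K n D A) ≤
      Module.finrank K (vanishSpace K n D (A ∪ B)) + B.card := by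
  have hunion : vanishSpace K n D (A ∪ B) = vanishSpace K n D A ⊓
      LinearMap.ker (LinearMap.pi fun x : (B : Set (Fin n → K)) => (aeval x.1).toLinearMap) := by
    rw [vanishSpace, vanishSpace, LinearMap.ker_pi, iInf_union, inf_assoc, iInf_subtype]
  rw [hunion]
  simpa using Submodule.finrank_le_finrank_inf_ker_add (vanishSpace K n D A)
    (LinearMap.pi fun x : (B : Set (Fin n → K)) => (aeval x.1).toLinearMap)

theorem finrank_restrictTotalDegree_le_finrank_vanishSpace {D d : ℕ} {E : Set (Fin n → K)}
    {p : MvPolynomial (Fin n) K} (hp : p ≠ 0) (hpd : p.totalDegree + d ≤ D)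
    (hpE : ∀ x ∈ E, aeval x p = 0) :
    Module.finrank K (restrictTotalDegree (Fin n) K d) ≤
      Module.finrank K (vanishSpace K n D E) := by
  have hmul (g : MvPolynomial (Fin n) K) (hg : g ∈ restrictTotalDegree (Fin n) K d) :
      p * g ∈ vanishSpace K n D E := by
    rw [mem_restrictTotalDegree] at hg
    refine mem_vanishSpace.2 ⟨(totalDegree_mul p g).trans (by omega), fun x hx => ?_⟩
    rw [map_mul, hpE x hx, zero_mul]
  let mulP : restrictTotalDegree (Fin n) K d →ₗ[K] vanishSpace K n D E :=
    ((LinearMap.mulLeft K p).comp (Submodule.subtype _)).codRestrict _ fun g => hmul g g.2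
  exact LinearMap.finrank_le_finrank_of_injective (f := mulP)
    fun g₁ g₂ h => Subtype.ext (mul_left_cancel₀ hp (congrArg Subtype.val h))

end vanishSpace

theorem too_many_points_on_parallel_hyperplanes_special_general {K : Type*} [Field K]
    (n m k : ℕ)
    (ℓ : ((Fin n → K) →ₗ[K] K)) (hℓ : ℓ ≠ 0)
    (c : Fin k → K)
    (E : Finset (Fin n → K)) (hEcard : E.card ≤ (m + n - 1).choose n)
    (hbig : (m + n - 1).choose n - (m - k + n - 1).choose n <
      (E.filter (fun x => ∃ i : Fin k, ℓ x = c i)).card) :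
    (∃ f : MvPolynomial (Fin n) K, f ≠ 0 ∧ f.totalDegree ≤ m - 1 ∧
        ∀ x ∈ E, (∃ i : Fin k, ℓ x = c i) → MvPolynomial.aeval x f = 0) ∧
      (m + n - 1).choose n - E.card <
        Module.finrank K ↥(vanishSpace K n (m - 1) (E : Set (Fin n → K))) := by
  set E' := E.filter (fun x => ∃ i : Fin k, ℓ x = c i)
  have hE'E : E' ⊆ E := Finset.filter_subset _ _
  have hE'card := Finset.card_le_card hE'E
  obtain hkm | hmk := lt_or_ge k m
  swap
  · have hn : 0 < n := Fin.pos_iff_nonempty.2 (LinearMap.nonempty_of_pi_ne_zero hℓ)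
    rw [Nat.choose_eq_zero_of_lt (by omega : m - k + n - 1 < n)] at hbig
    omega
  obtain ⟨p, hp0, hpdeg, hpvan⟩ := 
    exists_ne_zero_totalDegree_le_vanishing_on_hyperplanes hℓ c
  rw [Fintype.card_fin] at hpdeg
  refine ⟨⟨p, hp0, by omega, fun x _ hx => hpvan x hx⟩, ?_⟩
  have hE' : (m - k + n - 1).choose n ≤ Module.finrank K (vanishSpace K n (m - 1) E') := by
    have hpE' : ∀ x ∈ (E' : Set (Fin n → K)), aeval x p = 0 :=
      fun x hx => hpvan x (Finset.mem_filter.1 hx).2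
    have := finrank_restrictTotalDegree_le_finrank_vanishSpace (D := m - 1) (d := m - 1 - k) hp0
      (by omega) hpE'
    rwa [finrank_restrictTotalDegree, show m - 1 - k + n = m - k + n - 1 by omega] at this
  have hE := finrank_vanishSpace_le_finrank_vanishSpace_union_add_card (m - 1) E' (E \ E')
  rw [← Finset.coe_union, Finset.union_sdiff_of_subset hE'E,
    Finset.card_sdiff_of_subset hE'E] at hE
  have := Nat.choose_le_choose n (show m - k + n - 1 ≤ m + n - 1 by omega)
  omega

/-- Lemma ("anynaf", condition 1, affine version): if `#E ≤ C(m+n-1, n)` and more than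
`C(m+n-1,n) - C(m-k+n-1,n)` points of `E` lie on a union of `k ≤ m` distinct parallel
hyperplanes `{ℓ(x) = c_i}`, then there is a nonzero polynomial of degree `≤ m-1` vanishing
on `E ∩ (H_1 ∪ ⋯ ∪ H_k)`; in particular `E` does not impose independent conditions on
polynomials of degree `≤ m-1`. -/
theorem too_many_points_on_parallel_hyperplanes_special {K : Type*} [Field K] [CharZero K]
    (n m k : ℕ) (hn : 2 ≤ n) (hm : 1 ≤ m) (hk : k ≤ m)
    (ℓ : ((Fin n → K) →ₗ[K] K)) (hℓ : ℓ ≠ 0)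
    (c : Fin k → K) (hc : Function.Injective c)
    (E : Finset (Fin n → K)) (hEcard : E.card ≤ (m + n - 1).choose n)
    (hbig : (m + n - 1).choose n - (m - k + n - 1).choose n <
      (E.filter (fun x => ∃ i : Fin k, ℓ x = c i)).card) :
    (∃ f : MvPolynomial (Fin n) K, f ≠ 0 ∧ f.totalDegree ≤ m - 1 ∧
        ∀ x ∈ E, (∃ i : Fin k, ℓ x = c i) → MvPolynomial.aeval x f = 0) ∧
      (m + n - 1).choose n - E.card <
        Module.finrank K ↥(vanishSpace K n (m - 1) (E : Set (Fin n → K))) :=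
  too_many_points_on_parallel_hyperplanes_special_general n m k ℓ hℓ c E hEcard hbig
end

section
/- Define a scrambled 1-simplex of size m in K^n to be any set of at most m collinear points, and recursively define a scrambled k-simplex of size m to be a set E contained in the union of m distinct parallel affine hyperplanes (of dimension k-1 within the ambient affine span) H_1,...,H_m such that E ∩ H_i is a scrambled (k-1)-simplex of size i. Then, for K of characteristic 0, any subset E of a scrambled n-simplex of size m in K^n imposes independent conditions on polynomials of degree at most m-1: the space of polynomials in n variables of degree ≤ m-1 vanishing on E has dimension binomial(m+n-1, n) - #E. -/
open MvPolynomial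
open scoped Classical

/-- A scrambled `k`-simplex of size `m` in `K^n` (affine version): a scrambled `1`-simplex
of size `m` is a set of at most `m` collinear points; a scrambled `(k+1)`-simplex of size
`m` is a set contained in the union of `m` distinct parallel `k`-dimensional affine
subspaces `p_i + W` such that the intersection with the `i`-th one is a scrambled
`k`-simplex of size `i`. -/
def IsScrambledSimplex {K : Type*} [Field K] {n : ℕ} :
    ℕ → ℕ → Finset (Fin n → K) → Prop
  | 0, _, E => E = ∅
  | 1, m, E => E.card ≤ m ∧ ∃ p v : Fin n → K, ∀ x ∈ E, ∃ t : K, x = p + t • v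
  | (k + 2), m, E => ∃ W : Submodule K (Fin n → K), Module.finrank K ↥W = k + 1 ∧
      ∃ p : Fin m → (Fin n → K),
        (∀ i j : Fin m, i ≠ j → p i - p j ∉ W) ∧
        (∀ x ∈ E, ∃ i : Fin m, x - p i ∈ W) ∧
        ∀ i : Fin m,
          IsScrambledSimplex (k + 1) ((i : ℕ) + 1) (E.filter (fun x => x - p i ∈ W))

/-!
Say that `E ⊆ K^n` interpolates in degree `D` if every function on `E` is the restriction of a
polynomial of degree at most `D`; for finite `E` this is exactly the statement that `E` imposes
independent conditions on such polynomials, i.e. that evaluation onto `K^E` is surjective, and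
rank–nullity then gives the dimension count.

Interpolation glues: if `A` interpolates in degree `d`, `B` in degree `D`, and a polynomial `P`
of degree at most `D - d` vanishes on `B` but nowhere on `A`, then `A ∪ B` interpolates in
degree `D`. For a scrambled simplex with layers `p i + W`, the `i`-th layer interpolates in
degree `i` by induction on the dimension, and a product of `m - 1 - i` affine forms vanishing on
the layers above it but not on it glues it to them. A scrambled `1`-simplex is the case `W = 0`:
any `m` points interpolate in degree `m - 1`.
-/

section

variable {K : Type*} [Field K] {σ : Type*}

def InterpolatesOn (D : ℕ) (E : Set (σ → K)) : Prop :=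
  ∀ g : (σ → K) → K, ∃ f : MvPolynomial σ K, f.totalDegree ≤ D ∧ ∀ x ∈ E, eval x f = g x

theorem InterpolatesOn.mono {D D' : ℕ} {E E' : Set (σ → K)} (h : InterpolatesOn D E)
    (hD : D ≤ D') (hE : E' ⊆ E) : InterpolatesOn D' E' := fun g ↦
  (h g).imp fun _ ⟨hf, hfg⟩ ↦ ⟨hf.trans hD, fun x hx ↦ hfg x (hE hx)⟩

theorem interpolatesOn_singleton (a : σ → K) : InterpolatesOn 0 {a} := fun g ↦
  ⟨C (g a), by simp, by simp⟩

/-- Correct an interpolant on `B` by a multiple of `P`, which leaves it unchanged on `B`. -/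
theorem InterpolatesOn.union {d D : ℕ} {A B : Set (σ → K)} (hA : InterpolatesOn d A)
    (hB : InterpolatesOn D B) (P : MvPolynomial σ K) (hP : P.totalDegree + d ≤ D)
    (hPA : ∀ x ∈ A, eval x P ≠ 0) (hPB : ∀ x ∈ B, eval x P = 0) :
    InterpolatesOn D (A ∪ B) := by
  intro g
  obtain ⟨fB, hfB, hfBg⟩ := hB g
  obtain ⟨q, hq, hqg⟩ := hA fun x ↦ (g x - eval x fB) / eval x P
  refine ⟨fB + P * q, ?_, ?_⟩
  · refine (totalDegree_add _ _).trans (max_le hfB ?_)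
    exact (totalDegree_mul _ _).trans (by omega)
  · rintro x (hx | hx)
    · rw [eval_add, eval_mul, hqg x hx, mul_div_cancel₀ _ (hPA x hx)]
      ring
    · simp [hfBg x hx, hPB x hx]

theorem exists_totalDegree_le_one_separating [Fintype σ] (W : Submodule K (σ → K))
    {a b : σ → K} (hab : b - a ∉ W) :
    ∃ ℓ : MvPolynomial σ K, ℓ.totalDegree ≤ 1 ∧ (∀ x, x - a ∈ W → eval x ℓ = 0) ∧
      ∀ x, x - b ∈ W → eval x ℓ ≠ 0 := by
  obtain ⟨φ, hφ, hφW⟩ := Submodule.exists_dual_map_eq_bot_of_notMem hab inferInstance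
  replace hφW : ∀ w ∈ W, φ w = 0 := fun w hw ↦ LinearMap.le_ker_iff_map.mpr hφW hw
  let ℓ : MvPolynomial σ K := ∑ i, C (φ fun j ↦ if i = j then 1 else 0) * X i - C (φ a)
  have hℓ : ∀ x, eval x ℓ = φ (x - a) := fun x ↦ by
    simp [ℓ, LinearMap.pi_apply_eq_sum_univ φ x, mul_comm]
  refine ⟨ℓ, ?_, fun x hx ↦ by rw [hℓ, hφW _ hx], fun x hx ↦ ?_⟩
  · refine (totalDegree_sub_C_le _ _).trans ?_
    refine (totalDegree_finsetSum _ _).trans (Finset.sup_le fun i _ ↦ ?_)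
    exact (totalDegree_mul _ _).trans (by simp)
  · rw [hℓ, show x - a = (x - b) + (b - a) by abel, map_add, hφW _ hx, zero_add]
    exact hφ

/-- The bound `m + s ≤ D + 1` stands for `D = m - 1 + s` without truncation at `m = 0`; the shift
`s` lets the induction peel off layer `0` and glue it to the others. -/
theorem interpolatesOn_of_layers [Fintype σ] (W : Submodule K (σ → K)) (T : Set (σ → K))
    {m : ℕ} :
    ∀ {s D : ℕ} (p : Fin m → σ → K), (∀ i j, i ≠ j → p i - p j ∉ W) →
      (∀ i : Fin m, InterpolatesOn (i + s) {x ∈ T | x - p i ∈ W}) → m + s ≤ D + 1 →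
      InterpolatesOn D {x ∈ T | ∃ i, x - p i ∈ W} := by
  induction m with
  | zero => exact fun _ _ _ _ g ↦ ⟨0, by simp, by simp⟩
  | succ m ih =>
    intro s D p hp hL hD
    have hsplit : {x ∈ T | ∃ i, x - p i ∈ W} =
        {x ∈ T | x - p 0 ∈ W} ∪ {x ∈ T | ∃ i : Fin m, x - p i.succ ∈ W} := by
      ext x
      simp only [Fin.exists_fin_succ, Set.mem_ofPred_eq, Set.mem_union, and_or_left]
    choose ℓ hℓ_deg hℓ_zero hℓ_ne using fun i : Fin m ↦
      exists_totalDegree_le_one_separating W (hp 0 i.succ (Fin.succ_ne_zero i).symm)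
    have hB : InterpolatesOn D {x ∈ T | ∃ i : Fin m, x - p i.succ ∈ W} :=
      ih (fun i ↦ p i.succ) (fun i j hij ↦ hp _ _ (Fin.succ_injective _ |>.ne hij))
        (fun i ↦ by simpa [add_right_comm _ 1 s, add_assoc] using hL i.succ) (by omega)
    rw [hsplit]
    refine (hL 0).union hB (∏ i, ℓ i) ?_ ?_ ?_
    · calc (∏ i, ℓ i).totalDegree + ((0 : Fin (m + 1)) + s)
          ≤ (∑ i, (ℓ i).totalDegree) + s := by simpa using totalDegree_finsetProd _ _
        _ ≤ (∑ _i : Fin m, 1) + s := by gcongr with i; exact hℓ_deg i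
        _ ≤ D := by
          rw [Finset.sum_const, Finset.card_univ, Fintype.card_fin, smul_eq_mul, mul_one]
          omega
    · intro x hx
      rw [eval_prod, Finset.prod_ne_zero_iff]
      exact fun i _ ↦ hℓ_ne i x hx.2
    · rintro x ⟨-, i, hi⟩
      rw [eval_prod]
      exact Finset.prod_eq_zero (Finset.mem_univ i) (hℓ_zero i x hi)

open Finset in
theorem interpolatesOn_finset [Fintype σ] (T : Finset (σ → K)) :
    InterpolatesOn (#T - 1) (T : Set (σ → K)) := by
  let p : Fin #T → σ → K := fun i ↦ T.equivFin.symm i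
  have hp : ∀ i j, i ≠ j → p i - p j ∉ (⊥ : Submodule K (σ → K)) := fun i j hij ↦ by
    simpa [p, sub_eq_zero, Subtype.val_inj] using hij
  have hlayer : ∀ i : Fin #T, InterpolatesOn (i + 0) {x ∈ (T : Set (σ → K)) | x - p i ∈ ⊥} :=
    fun i ↦ (interpolatesOn_singleton (p i)).mono (Nat.zero_le _) fun x hx ↦
      sub_eq_zero.mp ((Submodule.mem_bot K).mp hx.2)
  refine (interpolatesOn_of_layers ⊥ T p hp hlayer (by omega)).mono le_rfl fun x hx ↦ ?_
  exact ⟨hx, T.equivFin ⟨x, hx⟩, by simp [p]⟩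

theorem IsScrambledSimplex.interpolatesOn {n : ℕ} :
    ∀ {k m : ℕ} {T : Finset (Fin n → K)}, IsScrambledSimplex k m T →
      InterpolatesOn (m - 1) (T : Set (Fin n → K))
  | 0, _, T, hT => by
    rw [IsScrambledSimplex] at hT
    simpa [hT] using (interpolatesOn_singleton 0).mono (Nat.zero_le _) (Set.empty_subset _)
  | 1, _, T, hT => (interpolatesOn_finset T).mono (by rw [IsScrambledSimplex] at hT; omega) le_rfl
  | k + 2, m, T, hT => by
    obtain ⟨W, -, p, hp, hcover, hlayers⟩ := hT
    have hlayer : ∀ i : Fin m, InterpolatesOn (i + 0) {x ∈ (T : Set _) | x - p i ∈ W} :=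
      fun i ↦ by simpa using (hlayers i).interpolatesOn
    exact (interpolatesOn_of_layers W T p hp hlayer (by omega)).mono le_rfl
      fun x hx ↦ ⟨hx, hcover x hx⟩

theorem card_finsupp_sum_le (n D : ℕ) :
    Nat.card {d : Fin n →₀ ℕ // (d.sum fun _ e ↦ e) ≤ D} = (D + n).choose n := by
  let slack : {d : Fin n → ℕ // ∑ i, d i ≤ D} ≃ {P : Fin (n + 1) → ℕ // ∑ i, P i = D} :=
    { toFun := fun d ↦ ⟨Fin.cons (D - ∑ i, d.1 i) d.1, by simp [Fin.sum_cons, d.2]⟩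
      invFun := fun P ↦ ⟨Fin.tail P.1, by
        have := P.2; rw [Fin.sum_univ_succ] at this; simp only [Fin.tail]; omega⟩
      left_inv := fun d ↦ rfl
      right_inv := fun ⟨P, hP⟩ ↦ by
        rw [Fin.sum_univ_succ] at hP
        refine Subtype.ext ((congrArg (Fin.cons · _) ?_).trans (Fin.cons_self_tail P))
        simp only [Fin.tail]
        omega }
  rw [Nat.card_congr ((Finsupp.equivFunOnFinite.subtypeEquiv fun d ↦ by
      simp [Finsupp.sum_fintype]).trans (slack.trans (Sym.equivNatSumOfFintype _ _).symm)),
    Nat.card_eq_fintype_card, Sym.card_sym_eq_choose, Fintype.card_fin, add_right_comm,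
    Nat.add_sub_cancel, add_comm n, Nat.choose_symm_add]

theorem finrank_restrictTotalDegree (n D : ℕ) :
    Module.finrank K (restrictTotalDegree (Fin n) K D) = (D + n).choose n := by
  rw [restrictTotalDegree, Module.finrank_eq_nat_card_basis (basisRestrictSupport K _)]
  exact card_finsupp_sum_le n D

open Finset in
theorem finrank_vanishSpace_of_interpolatesOn {n D : ℕ} {E : Finset (Fin n → K)}
    (hE : InterpolatesOn D (E : Set (Fin n → K))) :
    Module.finrank K (vanishSpace K n D E) = (D + n).choose n - #E := by
  let R := restrictTotalDegree (Fin n) K D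
  let ev : MvPolynomial (Fin n) K →ₗ[K] (E → K) :=
    LinearMap.pi fun x ↦ (aeval (x : Fin n → K)).toLinearMap
  have hvan : vanishSpace K n D E = R ⊓ LinearMap.ker ev := by
    ext f
    simp [vanishSpace, ev, R, funext_iff]
  have hsurj : LinearMap.range (ev.domRestrict R) = ⊤ := by
    refine LinearMap.range_eq_top.mpr fun v ↦ ?_
    obtain ⟨f, hf, hfv⟩ := hE fun x ↦ if h : x ∈ E then v ⟨x, h⟩ else 0
    refine ⟨⟨f, (mem_restrictTotalDegree _ _ _).mpr hf⟩, funext fun x ↦ ?_⟩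
    simpa [ev] using hfv x x.2
  have hrank := (ev.domRestrict R).finrank_range_add_finrank_ker
  rw [hsurj, finrank_top, Module.finrank_fintype_fun_eq_card, Fintype.card_coe,
    LinearMap.ker_domRestrict, ← Submodule.finrank_map_subtype_eq, Submodule.map_comap_subtype,
    ← hvan, finrank_restrictTotalDegree] at hrank
  omega

end

theorem scrambled_simplex_nonspecial_general {K : Type*} [Field K]
    (n m : ℕ) (hm : 1 ≤ m)
    (E T : Finset (Fin n → K)) (hT : IsScrambledSimplex n m T) (hET : E ⊆ T) :
    Module.finrank K ↥(vanishSpace K n (m - 1) (E : Set (Fin n → K))) =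
      (m + n - 1).choose n - E.card := by
  have hE : InterpolatesOn (m - 1) (E : Set (Fin n → K)) :=
    hT.interpolatesOn.mono le_rfl (Finset.coe_subset.mpr hET)
  rw [finrank_vanishSpace_of_interpolatesOn hE, Nat.sub_add_comm hm]

/-- Proposition ("skewsimplex", affine version): any subset `E` of a scrambled `n`-simplex
of size `m` in `K^n` imposes independent conditions on polynomials of degree at most
`m-1`: the vanishing space has dimension `C(m+n-1, n) - #E`. -/
theorem scrambled_simplex_nonspecial {K : Type*} [Field K] [CharZero K]
    (n m : ℕ) (hn : 1 ≤ n) (hm : 1 ≤ m)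
    (E T : Finset (Fin n → K)) (hT : IsScrambledSimplex n m T) (hET : E ⊆ T) :
    Module.finrank K ↥(vanishSpace K n (m - 1) (E : Set (Fin n → K))) =
      (m + n - 1).choose n - E.card :=
  scrambled_simplex_nonspecial_general n m hm E T hT hET
end
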